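/- arXiv:1409.2118 — 5 statements merged into one kernel-verified Lean document; each statement's English description precedes it below -/
import Mathlib

section
/- Let n ≥ 2 be an integer, f = sinh, and suppose y : (0,∞) → ℝ is a twice differentiable positive solution of y'' + (n-1)(f'/f)y' - (n-1)y/f² = 0 with y(r) → +∞ as r → 0⁺, y(r) → 0 as r → +∞, and y' < 0 on (0,∞). Then setting x = y'/y, one has x(r) ≥ R₁(r) for all r > 0, where R₁(r) = [-(n-1)cosh r - √((n-1)²cosh²r + 4(n-1))]/(2 sinh r). -/
/-!
Work with `u = y / y' = 1 / x` instead of `x`: it is negative on `(0, ∞)` and solves the Riccati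
equation `u' = 1 + (n-1) coth r · u - (n-1) u² / sinh² r`, whose right-hand side is
`u² Q(1/u)`. If `x(r₀) < R₁(r₀)`, this right-hand side is positive at `(r₀, u(r₀))`. For negative
`u` it increases with `r`, and it is concave in `u` with value `1` at `u = 0`, so it stays
`≥ δ > 0` on `[r₀, ∞) × [u(r₀), 0]`. Then `u` cannot drop below `u(r₀)`, grows at least linearly,
and eventually becomes nonnegative, which is a contradiction.
-/

open Real Set Filter

noncomputable def sinhRiccati (m r u : ℝ) : ℝ :=
  1 + m * (cosh r / sinh r) * u - m / sinh r ^ 2 * u ^ 2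

theorem hasDerivAt_div_deriv_of_ode {y : ℝ → ℝ} {m r : ℝ} (hy1 : DifferentiableAt ℝ y r)
    (hy2 : DifferentiableAt ℝ (deriv y) r)
    (hode : deriv (deriv y) r + m * (cosh r / sinh r) * deriv y r - m * y r / sinh r ^ 2 = 0)
    (hy' : deriv y r ≠ 0) :
    HasDerivAt (fun t => y t / deriv y t) (sinhRiccati m r (y r / deriv y r)) r := by
  refine (hy1.hasDerivAt.div hy2.hasDerivAt hy').congr_deriv ?_
  unfold sinhRiccati
  rw [eq_sub_of_add_eq (eq_add_of_sub_eq hode)]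
  field_simp
  ring

theorem cosh_div_sinh_le_cosh_div_sinh {a b : ℝ} (ha : 0 < a) (hab : a ≤ b) :
    cosh b / sinh b ≤ cosh a / sinh a := by
  have hsub : 0 ≤ sinh (b - a) := sinh_nonneg_iff.mpr (sub_nonneg.mpr hab)
  rw [sinh_sub] at hsub
  rw [div_le_div_iff₀ (sinh_pos_iff.mpr (ha.trans_le hab)) (sinh_pos_iff.mpr ha)]
  linarith

theorem sinhRiccati_le_sinhRiccati {m a b u : ℝ} (hm : 0 ≤ m) (ha : 0 < a) (hab : a ≤ b)
    (hu : u ≤ 0) : sinhRiccati m a u ≤ sinhRiccati m b u := by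
  have hcoth := cosh_div_sinh_le_cosh_div_sinh ha hab
  have hsinh : m / sinh b ^ 2 ≤ m / sinh a ^ 2 := by
    gcongr
    exact sinh_le_sinh.mpr hab
  unfold sinhRiccati
  nlinarith [mul_le_mul_of_nonneg_left hcoth hm, sq_nonneg u]

theorem min_one_le_one_add_mul_sub_mul_sq {b k u₀ u : ℝ} (hk : 0 ≤ k) (hu₀ : u₀ ≤ u)
    (hu : u ≤ 0) : min 1 (1 + b * u₀ - k * u₀ ^ 2) ≤ 1 + b * u - k * u ^ 2 := by
  set A := 1 + b * u₀ - k * u₀ ^ 2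
  rcases hu.lt_or_eq with hu | rfl
  · -- concavity: the quadratic lies above its chord over `[u₀, 0]`
    have hu₀0 : u₀ < 0 := hu₀.trans_lt hu
    set t := u / u₀
    have ht : u = t * u₀ := by simp [t, hu₀0.ne]
    have ht0 : 0 ≤ t := div_nonneg_of_nonpos hu.le hu₀0.le
    have ht1 : t ≤ 1 := (div_le_one_of_neg hu₀0).mpr hu₀
    calc min 1 A
        ≤ (1 - t) * 1 + t * A := by nlinarith [min_le_left 1 A, min_le_right 1 A]
      _ = 1 + b * u - k * u ^ 2 - k * t * (1 - t) * u₀ ^ 2 := by rw [ht]; ring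
      _ ≤ 1 + b * u - k * u ^ 2 := by
          have := mul_nonneg (mul_nonneg (mul_nonneg hk ht0) (sub_nonneg.mpr ht1)) (sq_nonneg u₀)
          linarith
  · simp

theorem quadratic_pos_of_lt_lower_root {b c x : ℝ} (hx : x < (-b - √(b ^ 2 + 4 * c)) / 2) :
    0 < x ^ 2 + b * x - c := by
  have hlt : √(b ^ 2 + 4 * c) < -(2 * x + b) := by linarith
  have hpos : 0 < -(2 * x + b) := (sqrt_nonneg _).trans_lt hlt
  nlinarith [(sqrt_lt' hpos).mp hlt]

theorem add_mul_sub_le_of_lt_deriv {u u' : ℝ → ℝ} {a δ : ℝ} (hδ : 0 ≤ δ)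
    (hu : ∀ t ≥ a, HasDerivAt u (u' t) t) (hbound : ∀ t ≥ a, u a ≤ u t → δ < u' t) :
    ∀ t ≥ a, u a + δ * (t - a) ≤ u t := by
  intro t ht
  refine image_le_of_deriv_right_lt_deriv_boundary' (f := fun s => u a + δ * (s - a))
    (f' := fun _ => δ) ?_ ?_ (by simp)
    (fun s hs => (hu s hs.1).continuousAt.continuousWithinAt)
    (fun s hs => (hu s hs.1).hasDerivWithinAt) ?_ ⟨ht, le_rfl⟩
  · fun_prop
  · intro s _
    simpa using ((hasDerivAt_id s).sub_const a).const_mul δ |>.const_add (u a) |>.hasDerivWithinAt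
  · intro s hs hus
    exact hbound s hs.1 (by rw [← hus]; nlinarith [hs.1])

theorem sinhRiccati_inv_pos_of_lt {m r w : ℝ} (hm : 0 ≤ m) (hr : 0 < r)
    (hw : w < (-m * cosh r - √(m ^ 2 * cosh r ^ 2 + 4 * m)) / (2 * sinh r)) :
    0 < sinhRiccati m r w⁻¹ := by
  have hs : 0 < sinh r := sinh_pos_iff.mpr hr
  have hX : sinh r * w < (-(m * cosh r) - √((m * cosh r) ^ 2 + 4 * m)) / 2 := by
    rw [lt_div_iff₀ (by positivity)] at hw
    rw [mul_pow]
    linarith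
  have hQ := quadratic_pos_of_lt_lower_root hX
  have hw0 : w ≠ 0 := by
    rintro rfl
    nlinarith
  have hF : sinhRiccati m r w⁻¹
      = ((sinh r * w) ^ 2 + m * cosh r * (sinh r * w) - m) / (sinh r * w) ^ 2 := by
    unfold sinhRiccati
    field_simp
  rw [hF]
  exact div_pos hQ (by positivity)

theorem min_one_sinhRiccati_le {m a b u₀ u : ℝ} (hm : 0 ≤ m) (ha : 0 < a) (hab : a ≤ b)
    (hu₀ : u₀ ≤ u) (hu : u ≤ 0) : min 1 (sinhRiccati m a u₀) ≤ sinhRiccati m b u :=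
  (min_one_le_one_add_mul_sub_mul_sq (by positivity) hu₀ hu).trans
    (sinhRiccati_le_sinhRiccati hm ha hab hu)

theorem stmt4_general (n : ℕ) (hn : 2 ≤ n) (y : ℝ → ℝ)
    (hpos : ∀ r ∈ Ioi (0 : ℝ), 0 < y r)
    (hy1 : ∀ r ∈ Ioi (0 : ℝ), DifferentiableAt ℝ y r)
    (hy2 : ∀ r ∈ Ioi (0 : ℝ), DifferentiableAt ℝ (deriv y) r)
    (hode : ∀ r ∈ Ioi (0 : ℝ),
      deriv (deriv y) r + (n - 1 : ℝ) * (Real.cosh r / Real.sinh r) * deriv y r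
        - (n - 1 : ℝ) * y r / (Real.sinh r) ^ 2 = 0)
    (hy' : ∀ r ∈ Ioi (0 : ℝ), deriv y r < 0)
    (x R₁ : ℝ → ℝ)
    (hx : ∀ r, x r = deriv y r / y r)
    (hR : ∀ r, R₁ r = (-(n - 1 : ℝ) * Real.cosh r
        - Real.sqrt ((n - 1 : ℝ) ^ 2 * (Real.cosh r) ^ 2 + 4 * (n - 1 : ℝ)))
        / (2 * Real.sinh r)) :
    ∀ r ∈ Ioi (0 : ℝ), R₁ r ≤ x r := by
  intro r₀ hr₀
  by_contra! hlt
  have hm : (0 : ℝ) ≤ n - 1 := by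
    have : (2 : ℝ) ≤ n := by exact_mod_cast hn
    linarith
  set u : ℝ → ℝ := fun t => y t / deriv y t
  have hu_neg : ∀ t > 0, u t < 0 := fun t ht => div_neg_of_pos_of_neg (hpos t ht) (hy' t ht)
  have hu_deriv : ∀ t ≥ r₀, HasDerivAt u (sinhRiccati (n - 1) t (u t)) t := fun t ht =>
    have ht : t ∈ Ioi 0 := lt_of_lt_of_le hr₀ ht
    hasDerivAt_div_deriv_of_ode (hy1 t ht) (hy2 t ht) (hode t ht) (hy' t ht).ne
  have hF₀ : 0 < sinhRiccati (n - 1) r₀ (u r₀) := by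
    have := sinhRiccati_inv_pos_of_lt hm hr₀ (hR r₀ ▸ hx r₀ ▸ hlt)
    rwa [inv_div] at this
  set δ := min 1 (sinhRiccati (n - 1) r₀ (u r₀))
  have hδ : 0 < δ := lt_min one_pos hF₀
  have hgrowth := add_mul_sub_le_of_lt_deriv (half_pos hδ).le hu_deriv fun t ht hut =>
    (half_lt_self hδ).trans_le
      (min_one_sinhRiccati_le hm hr₀ ht hut (hu_neg t (lt_of_lt_of_le hr₀ ht)).le)
  have hu₀ := hu_neg r₀ hr₀
  set T := r₀ + 2 * -u r₀ / δ with hT_def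
  have hT : r₀ ≤ T := le_add_of_nonneg_right (div_nonneg (by linarith) hδ.le)
  have hreach : δ / 2 * (T - r₀) = -u r₀ := by rw [hT_def]; field_simp; ring
  linarith [hgrowth T hT, hu_neg T (lt_of_lt_of_le hr₀ hT)]

theorem stmt4 (n : ℕ) (hn : 2 ≤ n) (y : ℝ → ℝ)
    (hpos : ∀ r ∈ Ioi (0 : ℝ), 0 < y r)
    (hy1 : ∀ r ∈ Ioi (0 : ℝ), DifferentiableAt ℝ y r)
    (hy2 : ∀ r ∈ Ioi (0 : ℝ), DifferentiableAt ℝ (deriv y) r)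
    (hode : ∀ r ∈ Ioi (0 : ℝ),
      deriv (deriv y) r + (n - 1 : ℝ) * (Real.cosh r / Real.sinh r) * deriv y r
        - (n - 1 : ℝ) * y r / (Real.sinh r) ^ 2 = 0)
    (hlim0 : Tendsto y (nhdsWithin 0 (Ioi 0)) atTop)
    (hliminf : Tendsto y atTop (nhds 0))
    (hy' : ∀ r ∈ Ioi (0 : ℝ), deriv y r < 0)
    (x R₁ : ℝ → ℝ)
    (hx : ∀ r, x r = deriv y r / y r)
    (hR : ∀ r, R₁ r = (-(n - 1 : ℝ) * Real.cosh r
        - Real.sqrt ((n - 1 : ℝ) ^ 2 * (Real.cosh r) ^ 2 + 4 * (n - 1 : ℝ)))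
        / (2 * Real.sinh r)) :
    ∀ r ∈ Ioi (0 : ℝ), R₁ r ≤ x r :=
  stmt4_general n hn y hpos hy1 hy2 hode hy' x R₁ hx hR
end

section
/- Let n ≥ 2 be an integer and let y be a twice differentiable positive solution on (0,∞) of y'' + (n-1)(cosh r/sinh r)·y' - (n-1)y/sinh²r = 0 with y → +∞ at 0⁺, y → 0 at +∞, and y' < 0. Then z(r) = sinh(r)·y'(r)/y(r) satisfies z(r) ≤ Z₁(r) for all r > 0, where Z₁(r) = [-(n-2)cosh r - √((n-2)²cosh²r + 4(n-1))]/2. -/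
/-!
`z = sinh · (log y)'` solves the Riccati equation `sinh · z' = -z² - (n-2) cosh · z + (n-1)`,
whose right-hand side is positive exactly when `Z₁ < z < 0`. If `z(r₀) > Z₁(r₀)` for some `r₀`,
then, since `Z₁` is decreasing and `z < 0`, the level `z(r₀)` can never be crossed downwards, so
`z ≥ z(r₀)` on `[r₀, ∞)`. Integrating `(log y)' ≥ z(r₀) / sinh` against the bounded antiderivative
`log tanh (r/2)` of `1 / sinh` bounds `y` below by a positive constant, contradicting `y → 0`.
-/

open Real Set Filter Topology

/-- The smaller root of `X² + b X - c`; `Z₁ r = negRoot ((n - 2) cosh r) (n - 1)`. -/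
noncomputable def negRoot (b c : ℝ) : ℝ := (-b - √(b ^ 2 + 4 * c)) / 2

lemma negRoot_anti {b b' : ℝ} (c : ℝ) (hb : 0 ≤ b) (hbb' : b ≤ b') :
    negRoot b' c ≤ negRoot b c := by
  have : √(b ^ 2 + 4 * c) ≤ √(b' ^ 2 + 4 * c) := sqrt_le_sqrt (by nlinarith)
  unfold negRoot
  linarith

lemma antitoneOn_negRoot_mul_cosh {m : ℝ} (hm : 0 ≤ m) (c : ℝ) :
    AntitoneOn (fun r => negRoot (m * cosh r) c) (Ici 0) := fun r hr _ ht hrt =>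
  negRoot_anti c (mul_nonneg hm (cosh_pos r).le)
    (mul_le_mul_of_nonneg_left (cosh_strictMonoOn.monotoneOn hr ht hrt) hm)

lemma neg_sq_sub_mul_add_pos_of_negRoot_lt {b c a : ℝ} (hc : 0 < c) (hlt : negRoot b c < a)
    (hneg : a < 0) : 0 < -a ^ 2 - b * a + c := by
  unfold negRoot at hlt
  set s := √(b ^ 2 + 4 * c)
  have hs : s ^ 2 = b ^ 2 + 4 * c := sq_sqrt (by nlinarith)
  have hsb : b < s := by nlinarith [sqrt_nonneg (b ^ 2 + 4 * c)]
  -- `(2a + b + s)(s - 2a - b) = 4(c - a² - ab)`, a product of the distances to the two roots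
  nlinarith [mul_pos (show 0 < 2 * a + b + s by linarith) (show 0 < s - (2 * a + b) by linarith)]

lemma le_of_hasDerivAt_pos_of_eq {f f' : ℝ → ℝ} {a r₀ : ℝ}
    (hf : ∀ t ∈ Ici r₀, HasDerivAt f (f' t) t) (h₀ : a ≤ f r₀)
    (hcross : ∀ t ∈ Ici r₀, f t = a → 0 < f' t) : ∀ t ∈ Ici r₀, a ≤ f t := fun _ ht =>
  image_le_of_deriv_right_lt_deriv_boundary' (f' := 0) continuousOn_const
    (fun _ _ => hasDerivWithinAt_const _ _ _) h₀
    (fun x hx => (hf x hx.1).continuousAt.continuousWithinAt)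
    (fun x hx => (hf x hx.1).hasDerivWithinAt) (fun x hx h => hcross x hx.1 h.symm) ⟨ht, le_rfl⟩

lemma hasDerivAt_sinh_mul_deriv_div_of_ode {y : ℝ → ℝ} {k t : ℝ} (ht : t ≠ 0) (hy : y t ≠ 0)
    (hy₁ : DifferentiableAt ℝ y t) (hy₂ : DifferentiableAt ℝ (deriv y) t)
    (hode : deriv (deriv y) t + k * (cosh t / sinh t) * deriv y t - k * y t / sinh t ^ 2 = 0) :
    HasDerivAt (fun r => sinh r * deriv y r / y r)
      ((-(sinh t * deriv y t / y t) ^ 2 - (k - 1) * cosh t * (sinh t * deriv y t / y t) + k)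
        / sinh t) t := by
  have hs : sinh t ≠ 0 := sinh_ne_zero.mpr ht
  have hy'' : deriv (deriv y) t = k * y t / sinh t ^ 2 - k * (cosh t / sinh t) * deriv y t := by
    linear_combination hode
  refine (((hasDerivAt_sinh t).mul hy₂.hasDerivAt).div hy₁.hasDerivAt hy).congr_deriv ?_
  rw [hy'', Pi.mul_apply]
  field_simp
  ring

lemma hasDerivAt_log_tanh_half {t : ℝ} (ht : 0 < t) :
    HasDerivAt (fun r => log (tanh (r / 2))) (1 / sinh t) t := by
  have hs : 0 < sinh (t / 2) := sinh_pos_iff.mpr (half_pos ht)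
  have hc : 0 < cosh (t / 2) := cosh_pos _
  have hdiv : HasDerivAt (fun r => sinh (r / 2) / cosh (r / 2))
      ((cosh (t / 2) * (1 / 2) * cosh (t / 2) - sinh (t / 2) * (sinh (t / 2) * (1 / 2)))
        / cosh (t / 2) ^ 2) t :=
    ((hasDerivAt_sinh _).comp t ((hasDerivAt_id t).div_const 2)).div
      ((hasDerivAt_cosh _).comp t ((hasDerivAt_id t).div_const 2)) hc.ne'
  simp only [tanh_eq_sinh_div_cosh]
  refine (hdiv.log (div_pos hs hc).ne').congr_deriv ?_
  have hdouble : sinh t = 2 * sinh (t / 2) * cosh (t / 2) := by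
    rw [← sinh_two_mul]; ring_nf
  rw [hdouble]
  field_simp
  linear_combination cosh_sq_sub_sinh_sq (t / 2)

lemma log_tanh_nonpos {t : ℝ} (ht : 0 ≤ t) : log (tanh t) ≤ 0 := by
  refine log_nonpos ?_ (tanh_lt_one t).le
  rw [tanh_eq_sinh_div_cosh]
  exact div_nonneg (sinh_nonneg_iff.mpr ht) (cosh_pos t).le

lemma exists_pos_le_of_le_sinh_mul_deriv_div {y : ℝ → ℝ} {a r₀ : ℝ} (hr₀ : 0 < r₀) (ha : a ≤ 0)
    (hpos : ∀ t ∈ Ici r₀, 0 < y t) (hy : ∀ t ∈ Ici r₀, DifferentiableAt ℝ y t)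
    (hbound : ∀ t ∈ Ici r₀, a ≤ sinh t * deriv y t / y t) :
    ∃ c > 0, ∀ t ∈ Ici r₀, c ≤ y t := by
  set F : ℝ → ℝ := fun r => log (y r) - a * log (tanh (r / 2))
  have hF : ∀ t ∈ Ici r₀,
      HasDerivAt F ((sinh t * deriv y t / y t - a) / sinh t) t := by
    intro t ht
    have ht₀ : 0 < t := hr₀.trans_le ht
    refine (((hy t ht).hasDerivAt.log (hpos t ht).ne').sub
      ((hasDerivAt_log_tanh_half ht₀).const_mul a)).congr_deriv ?_
    have : sinh t ≠ 0 := (sinh_pos_iff.mpr ht₀).ne'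
    field_simp
  have hmono : MonotoneOn F (Ici r₀) := by
    refine monotoneOn_of_hasDerivWithinAt_nonneg (convex_Ici r₀)
      (fun t ht => (hF t ht).continuousAt.continuousWithinAt)
      (fun t ht => (hF t (interior_subset ht)).hasDerivWithinAt) fun t ht => ?_
    have ht' : t ∈ Ici r₀ := interior_subset ht
    exact div_nonneg (sub_nonneg.mpr (hbound t ht'))
      (sinh_pos_iff.mpr (hr₀.trans_le ht')).le
  refine ⟨exp (F r₀), exp_pos _, fun t ht => ?_⟩
  have hFt : F t ≤ log (y t) := by
    have := log_tanh_nonpos (half_pos (hr₀.trans_le ht)).le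
    simp only [F]
    nlinarith
  calc exp (F r₀) ≤ exp (log (y t)) :=
        exp_le_exp.mpr ((hmono self_mem_Ici ht ht).trans hFt)
    _ = y t := exp_log (hpos t ht)

theorem stmt6_general (n : ℕ) (hn : 2 ≤ n) (y : ℝ → ℝ)
    (hpos : ∀ r ∈ Ioi (0 : ℝ), 0 < y r)
    (hy1 : ∀ r ∈ Ioi (0 : ℝ), DifferentiableAt ℝ y r)
    (hy2 : ∀ r ∈ Ioi (0 : ℝ), DifferentiableAt ℝ (deriv y) r)
    (hode : ∀ r ∈ Ioi (0 : ℝ),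
      deriv (deriv y) r + (n - 1 : ℝ) * (Real.cosh r / Real.sinh r) * deriv y r
        - (n - 1 : ℝ) * y r / (Real.sinh r) ^ 2 = 0)
    (hliminf : Tendsto y atTop (nhds 0))
    (hy' : ∀ r ∈ Ioi (0 : ℝ), deriv y r < 0)
    (z Z₁ : ℝ → ℝ)
    (hz : ∀ r, z r = Real.sinh r * deriv y r / y r)
    (hZ : ∀ r, Z₁ r = (-(n - 2 : ℝ) * Real.cosh r
        - Real.sqrt ((n - 2 : ℝ) ^ 2 * (Real.cosh r) ^ 2 + 4 * (n - 1 : ℝ))) / 2) :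
    ∀ r ∈ Ioi (0 : ℝ), z r ≤ Z₁ r := by
  have hn' : (2 : ℝ) ≤ n := by exact_mod_cast hn
  have hZ_negRoot : ∀ r, Z₁ r = negRoot ((n - 2) * cosh r) (n - 1) := fun r => by
    rw [hZ, negRoot, mul_pow, neg_mul]
  intro r₀ (hr₀ : 0 < r₀)
  by_contra! hlt
  have hpos₀ : ∀ t ∈ Ici r₀, 0 < t := fun t ht => hr₀.trans_le ht
  have hneg : z r₀ < 0 := by
    rw [hz]
    exact div_neg_of_neg_of_pos (mul_neg_of_pos_of_neg (sinh_pos_iff.mpr hr₀) (hy' r₀ hr₀))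
      (hpos r₀ hr₀)
  have hriccati : ∀ t ∈ Ici r₀, HasDerivAt z
      ((-z t ^ 2 - (n - 2) * cosh t * z t + (n - 1)) / sinh t) t := fun t ht => by
    have h := hasDerivAt_sinh_mul_deriv_div_of_ode (hpos₀ t ht).ne' (hpos t (hpos₀ t ht)).ne'
      (hy1 t (hpos₀ t ht)) (hy2 t (hpos₀ t ht)) (hode t (hpos₀ t ht))
    rw [← funext hz, ← hz] at h
    convert h using 3
    ring
  have hZ_anti : ∀ t ∈ Ici r₀, Z₁ t ≤ Z₁ r₀ := fun t (ht : r₀ ≤ t) => by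
    rw [hZ_negRoot, hZ_negRoot]
    exact antitoneOn_negRoot_mul_cosh (by linarith) _ hr₀.le (hr₀.le.trans ht) ht
  have hz_ge : ∀ t ∈ Ici r₀, z r₀ ≤ z t := by
    refine le_of_hasDerivAt_pos_of_eq hriccati le_rfl fun t ht hzt => ?_
    refine div_pos ?_ (sinh_pos_iff.mpr (hpos₀ t ht))
    rw [hzt]
    refine neg_sq_sub_mul_add_pos_of_negRoot_lt (by linarith) ?_ hneg
    rw [← hZ_negRoot]
    exact (hZ_anti t ht).trans_lt hlt
  obtain ⟨c, hc, hyc⟩ := exists_pos_le_of_le_sinh_mul_deriv_div hr₀ hneg.le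
    (fun t ht => hpos t (hpos₀ t ht)) (fun t ht => hy1 t (hpos₀ t ht))
    (fun t ht => hz t ▸ hz_ge t ht)
  obtain ⟨N, hN⟩ := eventually_atTop.mp (hliminf.eventually (eventually_lt_nhds hc))
  exact (hyc _ (le_max_right N r₀)).not_gt (hN _ (le_max_left N r₀))

theorem stmt6 (n : ℕ) (hn : 2 ≤ n) (y : ℝ → ℝ)
    (hpos : ∀ r ∈ Ioi (0 : ℝ), 0 < y r)
    (hy1 : ∀ r ∈ Ioi (0 : ℝ), DifferentiableAt ℝ y r)
    (hy2 : ∀ r ∈ Ioi (0 : ℝ), DifferentiableAt ℝ (deriv y) r)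
    (hode : ∀ r ∈ Ioi (0 : ℝ),
      deriv (deriv y) r + (n - 1 : ℝ) * (Real.cosh r / Real.sinh r) * deriv y r
        - (n - 1 : ℝ) * y r / (Real.sinh r) ^ 2 = 0)
    (hlim0 : Tendsto y (nhdsWithin 0 (Ioi 0)) atTop)
    (hliminf : Tendsto y atTop (nhds 0))
    (hy' : ∀ r ∈ Ioi (0 : ℝ), deriv y r < 0)
    (z Z₁ : ℝ → ℝ)
    (hz : ∀ r, z r = Real.sinh r * deriv y r / y r)
    (hZ : ∀ r, Z₁ r = (-(n - 2 : ℝ) * Real.cosh r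
        - Real.sqrt ((n - 2 : ℝ) ^ 2 * (Real.cosh r) ^ 2 + 4 * (n - 1 : ℝ))) / 2) :
    ∀ r ∈ Ioi (0 : ℝ), z r ≤ Z₁ r :=
  stmt6_general n hn y hpos hy1 hy2 hode hliminf hy' z Z₁ hz hZ
end

section
/- Let n ≥ 2 be an integer and let y be a twice differentiable positive solution on (0,∞) of y'' + (n-1)(cosh r/sinh r)·y' - (n-1)y/sinh²r = 0 with y → +∞ at 0⁺, y → 0 at +∞, and y' < 0. Then z(r) = sinh(r)·y'(r)/y(r) satisfies lim_{r→0⁺} z(r) = 1 - n. -/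
open Real Set Filter Topology

/-!
With `z = sinh · y' / y` the radial equation becomes the Riccati equation
`sinh r · z' = -z² - (n - 2) cosh r · z + (n - 1) = (A r - z) (z - B r)`, where `A > 0` and `B`
decreases from `B 0 = 1 - n`; since `y' < 0`, also `z < 0 < A`. If `z r₀ > B r₀` for some `r₀`,
then `z' > 0` wherever `z = z r₀` afterwards, so `z ≥ z r₀` on `[r₀, ∞)` and
`(log y)' ≥ z r₀ / sinh`, which is integrable at infinity: `y` could not tend to `0`. Hence
`z ≤ B ≤ 1 - n`, so `z` decreases; if it stayed below some `a < 1 - n` near `0`, then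
`z' ≤ -c / r` there and `z` would blow up at `0`.
-/

lemma sinh_le_mul_exp (s : ℝ) : sinh s ≤ s * exp s := by
  have h := add_one_le_exp (-(2 * s))
  have e1 : exp (-(2 * s)) = exp (-s) * exp (-s) := by rw [← exp_add]; ring_nf
  have e2 : exp (-s) * exp s = 1 := by rw [← exp_add]; simp
  rw [sinh_eq]
  nlinarith [mul_le_mul_of_nonneg_left (e1 ▸ h) (exp_pos s).le, exp_pos (-s)]

lemma monotone_sinh_mul_exp_neg : Monotone fun x => sinh x * exp (-x) := fun a x h => by
  have h1 : exp (-x) * exp (-x) ≤ exp (-a) * exp (-a) :=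
    mul_self_le_mul_self (exp_pos _).le (exp_le_exp.2 (neg_le_neg h))
  have e1 : exp a * exp (-a) = 1 := by rw [← exp_add]; simp
  have e2 : exp x * exp (-x) = 1 := by rw [← exp_add]; simp
  simp only [sinh_eq]
  linarith

/-- Since `sinh x · exp (-x)` increases, `c / sinh x ≥ -C exp (-x)` on `[a, ∞)`, so
`log f x - C exp (-x)` is monotone there. -/
lemma not_tendsto_zero_of_logDeriv_ge_div_sinh {f f' : ℝ → ℝ} {a c : ℝ} (ha : 0 < a) (hc : c ≤ 0)
    (hpos : ∀ x ∈ Ici a, 0 < f x) (hf : ∀ x ∈ Ici a, HasDerivAt f (f' x) x)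
    (hbound : ∀ x ∈ Ici a, c / sinh x ≤ f' x / f x) : ¬Tendsto f atTop (𝓝 0) := by
  have hk : 0 < sinh a * exp (-a) := mul_pos (sinh_pos_iff.2 ha) (exp_pos _)
  set C := -c / (sinh a * exp (-a))
  have hC : 0 ≤ C := div_nonneg (neg_nonneg.2 hc) hk.le
  set ψ : ℝ → ℝ := fun x => log (f x) - C * exp (-x)
  have hψ : ∀ x ∈ Ici a, HasDerivAt ψ (f' x / f x + C * exp (-x)) x := fun x hx => by
    have := ((hf x hx).log (hpos x hx).ne').sub (((hasDerivAt_neg x).exp).const_mul C)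
    exact this.congr_deriv (by ring)
  have hψ_mono : MonotoneOn ψ (Ici a) := by
    refine monotoneOn_of_hasDerivWithinAt_nonneg (convex_Ici a)
      (fun x hx => (hψ x hx).continuousAt.continuousWithinAt)
      (fun x hx => (hψ x (interior_subset hx)).hasDerivWithinAt) fun x hx => ?_
    rw [interior_Ici] at hx
    have hx' : 0 < sinh x := sinh_pos_iff.2 (ha.trans hx)
    have : -(C * exp (-x)) ≤ c / sinh x :=
      calc -(C * exp (-x)) = c * exp (-x) / (sinh a * exp (-a)) := by ring
        _ ≤ c * exp (-x) / (sinh x * exp (-x)) := by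
          rw [div_le_div_iff₀ hk (mul_pos hx' (exp_pos _))]
          exact mul_le_mul_of_nonpos_left (monotone_sinh_mul_exp_neg hx.le)
            (mul_nonpos_of_nonpos_of_nonneg hc (exp_pos _).le)
        _ = c / sinh x := mul_div_mul_right _ _ (exp_ne_zero _)
    linarith [hbound x (mem_Ici.2 hx.le)]
  have hlow : ∀ x ∈ Ici a, exp (ψ a) ≤ f x := fun x hx => by
    have hψx : ψ x ≤ log (f x) := by simp only [ψ]; linarith [mul_nonneg hC (exp_pos (-x)).le]
    calc exp (ψ a) ≤ exp (log (f x)) := exp_le_exp.2 ((hψ_mono self_mem_Ici hx hx).trans hψx)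
      _ = f x := exp_log (hpos x hx)
  intro hf0
  obtain ⟨x, hx, hxa⟩ :=
    ((hf0.eventually (gt_mem_nhds (exp_pos (ψ a)))).and (eventually_ge_atTop a)).exists
  exact (hx.trans_le (hlow x hxa)).false

lemma tendsto_atTop_of_deriv_le_neg_div {f f' : ℝ → ℝ} {b c : ℝ} (hb : 0 < b) (hc : 0 < c)
    (hf : ∀ x ∈ Ioo 0 b, HasDerivAt f (f' x) x) (hle : ∀ x ∈ Ioo 0 b, f' x ≤ -(c / x)) :
    Tendsto f (𝓝[>] 0) atTop := by
  have hφ : ∀ x ∈ Ioo 0 b, HasDerivAt (fun x => f x + c * log x) (f' x + c * x⁻¹) x :=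
    fun x hx => (hf x hx).add ((hasDerivAt_log hx.1.ne').const_mul c)
  have hφ_anti : AntitoneOn (fun x => f x + c * log x) (Ioo 0 b) := by
    refine antitoneOn_of_hasDerivWithinAt_nonpos (convex_Ioo 0 b)
      (fun x hx => (hφ x hx).continuousAt.continuousWithinAt)
      (fun x hx => (hφ x (interior_subset hx)).hasDerivWithinAt) fun x hx => ?_
    rw [interior_Ioo] at hx
    linarith [hle x hx, div_eq_mul_inv c x]
  have hb2 : b / 2 ∈ Ioo 0 b := ⟨by positivity, by linarith⟩
  have hlog : Tendsto (fun x => f (b / 2) + c * log (b / 2) + c * -log x) (𝓝[>] 0) atTop :=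
    tendsto_atTop_add_const_left _ _
      ((tendsto_neg_atBot_atTop.comp tendsto_log_nhdsGT_zero).const_mul_atTop hc)
  refine tendsto_atTop_mono' _ ?_ hlog
  filter_upwards [Ioo_mem_nhdsGT hb2.1] with x hx
  have := hφ_anti ⟨hx.1, hx.2.trans hb2.2⟩ hb2 hx.2.le
  simp only at this
  linarith

section Riccati

variable (n : ℝ)

noncomputable def riccatiQuad (r v : ℝ) : ℝ := -v ^ 2 - (n - 2) * cosh r * v + (n - 1)

noncomputable def riccatiDisc (r : ℝ) : ℝ := (n - 2) ^ 2 * cosh r ^ 2 + 4 * (n - 1)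

noncomputable def riccatiUpperRoot (r : ℝ) : ℝ := (-((n - 2) * cosh r) + √(riccatiDisc n r)) / 2

noncomputable def riccatiLowerRoot (r : ℝ) : ℝ := (-((n - 2) * cosh r) - √(riccatiDisc n r)) / 2

variable {n}

lemma riccatiQuad_eq_mul (hn : 1 ≤ n) (r v : ℝ) :
    riccatiQuad n r v = (riccatiUpperRoot n r - v) * (v - riccatiLowerRoot n r) := by
  have hdisc : 0 ≤ riccatiDisc n r := by unfold riccatiDisc; positivity
  have := sq_sqrt hdisc
  unfold riccatiQuad riccatiUpperRoot riccatiLowerRoot riccatiDisc at *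
  linear_combination (-1 / 4 : ℝ) * this

lemma riccatiLowerRoot_le_upperRoot (r : ℝ) : riccatiLowerRoot n r ≤ riccatiUpperRoot n r := by
  unfold riccatiLowerRoot riccatiUpperRoot
  linarith [sqrt_nonneg (riccatiDisc n r)]

lemma riccatiUpperRoot_pos (hn : 1 < n) (r : ℝ) : 0 < riccatiUpperRoot n r := by
  have : (n - 2) * cosh r < √(riccatiDisc n r) :=
    (le_abs_self _).trans_lt <| lt_sqrt_of_sq_lt (by rw [sq_abs, riccatiDisc]; nlinarith)
  unfold riccatiUpperRoot
  linarith

lemma riccatiLowerRoot_antitoneOn (hn : 2 ≤ n) : AntitoneOn (riccatiLowerRoot n) (Ici 0) := by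
  intro r hr s hs hrs
  have hcosh : cosh r ≤ cosh s := by
    rw [cosh_le_cosh, abs_of_nonneg hr, abs_of_nonneg (hr.trans hrs)]
    exact hrs
  have hdisc : riccatiDisc n r ≤ riccatiDisc n s := by
    unfold riccatiDisc
    gcongr
  unfold riccatiLowerRoot
  linarith [sqrt_le_sqrt hdisc, mul_le_mul_of_nonneg_left hcosh (by linarith : (0 : ℝ) ≤ n - 2)]

lemma riccatiLowerRoot_zero (hn : 0 ≤ n) : riccatiLowerRoot n 0 = 1 - n := by
  have : riccatiDisc n 0 = n ^ 2 := by unfold riccatiDisc; rw [cosh_zero]; ring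
  rw [riccatiLowerRoot, this, cosh_zero, sqrt_sq hn]
  ring

lemma tendsto_riccatiLowerRoot_zero (hn : 0 ≤ n) :
    Tendsto (riccatiLowerRoot n) (𝓝[>] 0) (𝓝 (1 - n)) := by
  rw [← riccatiLowerRoot_zero hn]
  unfold riccatiLowerRoot riccatiDisc
  exact Continuous.continuousWithinAt (by fun_prop)

end Riccati

lemma hasDerivAt_sinh_mul_deriv_div {n : ℝ} {y : ℝ → ℝ} {r : ℝ} (hr : sinh r ≠ 0) (hyr : y r ≠ 0)
    (hy1 : DifferentiableAt ℝ y r) (hy2 : DifferentiableAt ℝ (deriv y) r)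
    (hode : deriv (deriv y) r + (n - 1) * (cosh r / sinh r) * deriv y r
      - (n - 1) * y r / sinh r ^ 2 = 0) :
    HasDerivAt (fun x => sinh x * deriv y x / y x)
      (riccatiQuad n r (sinh r * deriv y r / y r) / sinh r) r := by
  refine (((hasDerivAt_sinh r).mul hy2.hasDerivAt).div hy1.hasDerivAt hyr).congr_deriv ?_
  rw [show deriv (deriv y) r = (n - 1) * y r / sinh r ^ 2
    - (n - 1) * (cosh r / sinh r) * deriv y r by linear_combination hode, riccatiQuad]
  simp only [Pi.mul_apply]
  field_simp
  ring

section RiccatiSolution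

variable {n : ℝ} {z : ℝ → ℝ}

lemma riccati_le_of_lowerRoot_lt (hn : 2 ≤ n)
    (hz : ∀ r ∈ Ioi 0, HasDerivAt z (riccatiQuad n r (z r) / sinh r) r) {r₀ : ℝ} (hr₀ : 0 < r₀)
    (hlow : riccatiLowerRoot n r₀ < z r₀) (hneg : z r₀ ≤ 0) {s : ℝ} (hs : r₀ ≤ s) :
    z r₀ ≤ z s := by
  have hz' : ∀ x ∈ Icc r₀ s, HasDerivAt z (riccatiQuad n x (z x) / sinh x) x :=
    fun x hx => hz x (hr₀.trans_le hx.1)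
  refine image_le_of_deriv_right_lt_deriv_boundary' (f' := 0) continuousOn_const
    (fun x _ => hasDerivWithinAt_const x _ _) le_rfl
    (fun x hx => (hz' x hx).continuousAt.continuousWithinAt)
    (fun x hx => (hz' x (Ico_subset_Icc_self hx)).hasDerivWithinAt) ?_ ⟨hs, le_rfl⟩
  intro x hx hzx
  have hx0 : 0 < x := hr₀.trans_le hx.1
  rw [← hzx, riccatiQuad_eq_mul (by linarith)]
  refine div_pos (mul_pos ?_ ?_) (sinh_pos_iff.2 hx0)
  · linarith [riccatiUpperRoot_pos (by linarith : 1 < n) x]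
  · linarith [riccatiLowerRoot_antitoneOn hn (mem_Ici.2 hr₀.le) (mem_Ici.2 hx0.le) hx.1]

lemma riccati_antitoneOn (hn : 2 ≤ n)
    (hz : ∀ r ∈ Ioi 0, HasDerivAt z (riccatiQuad n r (z r) / sinh r) r)
    (hle : ∀ r ∈ Ioi 0, z r ≤ riccatiLowerRoot n r) : AntitoneOn z (Ioi 0) := by
  refine antitoneOn_of_hasDerivWithinAt_nonpos (convex_Ioi 0)
    (fun x hx => (hz x hx).continuousAt.continuousWithinAt)
    (fun x hx => (hz x (interior_subset hx)).hasDerivWithinAt) fun x hx => ?_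
  rw [interior_Ioi] at hx
  rw [riccatiQuad_eq_mul (by linarith)]
  refine div_nonpos_of_nonpos_of_nonneg (mul_nonpos_of_nonneg_of_nonpos ?_ ?_)
    (sinh_pos_iff.2 hx).le
  · linarith [hle x hx, riccatiLowerRoot_le_upperRoot (n := n) x]
  · linarith [hle x hx]

lemma riccati_tendsto_atTop_of_le (hn : 2 ≤ n)
    (hz : ∀ r ∈ Ioi 0, HasDerivAt z (riccatiQuad n r (z r) / sinh r) r) {a : ℝ} (ha : a < 1 - n)
    (hle : ∀ r ∈ Ioi 0, z r ≤ a) : Tendsto z (𝓝[>] 0) atTop := by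
  set δ := (1 - n - a) / 2
  have hδ : 0 < δ := by simp only [δ]; linarith
  obtain ⟨s₁, hs₁, hs₁_pos⟩ := ((tendsto_riccatiLowerRoot_zero (by linarith)).eventually
    (lt_mem_nhds (by simp only [δ]; linarith : a + δ < 1 - n))).and self_mem_nhdsWithin |>.exists
  refine tendsto_atTop_of_deriv_le_neg_div hs₁_pos (c := δ / exp s₁) (by positivity)
    (fun x hx => hz x hx.1) fun x hx => ?_
  have hsinh : 0 < sinh x := sinh_pos_iff.2 hx.1
  have hQ : riccatiQuad n x (z x) ≤ -δ := by
    have h1 : 1 ≤ riccatiUpperRoot n x - z x := by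
      linarith [riccatiUpperRoot_pos (by linarith : 1 < n) x, hle x hx.1]
    have h2 : z x - riccatiLowerRoot n x ≤ -δ := by
      linarith [hle x hx.1, riccatiLowerRoot_antitoneOn hn (mem_Ici.2 hx.1.le)
        (mem_Ici.2 (le_of_lt hs₁_pos)) hx.2.le]
    rw [riccatiQuad_eq_mul (by linarith)]
    nlinarith
  have hsinh_le : sinh x ≤ exp s₁ * x :=
    (sinh_le_mul_exp x).trans <| by
      rw [mul_comm]; exact mul_le_mul_of_nonneg_right (exp_le_exp.2 hx.2.le) hx.1.le
  calc riccatiQuad n x (z x) / sinh x ≤ -δ / sinh x := div_le_div_of_nonneg_right hQ hsinh.le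
    _ ≤ -(δ / exp s₁ / x) := by
      rw [div_div, neg_div]
      exact neg_le_neg (div_le_div_of_nonneg_left hδ.le hsinh hsinh_le)

lemma riccati_tendsto_one_sub (hn : 2 ≤ n)
    (hz : ∀ r ∈ Ioi 0, HasDerivAt z (riccatiQuad n r (z r) / sinh r) r)
    (hle : ∀ r ∈ Ioi 0, z r ≤ riccatiLowerRoot n r) : Tendsto z (𝓝[>] 0) (𝓝 (1 - n)) := by
  rw [tendsto_order]
  refine ⟨fun a ha => ?_, fun a ha => ?_⟩
  · by_contra hnot
    have hanti := riccati_antitoneOn hn hz hle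
    have hle_a : ∀ r ∈ Ioi (0 : ℝ), z r ≤ a := fun r hr => by
      obtain ⟨r', hr'a, hr'⟩ :=
        ((not_eventually.1 hnot).and_eventually (Ioo_mem_nhdsGT hr)).exists
      exact (hanti hr'.1 hr hr'.2.le).trans (not_lt.1 hr'a)
    obtain ⟨r, hr, hr_pos⟩ := (((riccati_tendsto_atTop_of_le hn hz ha hle_a).eventually_gt_atTop
      a).and self_mem_nhdsWithin).exists
    exact (hr.trans_le (hle_a r hr_pos)).false
  · filter_upwards [self_mem_nhdsWithin] with r hr
    calc z r ≤ riccatiLowerRoot n r := hle r hr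
      _ ≤ riccatiLowerRoot n 0 :=
        riccatiLowerRoot_antitoneOn hn self_mem_Ici (mem_Ici.2 hr.le) hr.le
      _ = 1 - n := riccatiLowerRoot_zero (by linarith)
      _ < a := ha

end RiccatiSolution

theorem stmt8_general (n : ℕ) (hn : 2 ≤ n) (y : ℝ → ℝ)
    (hpos : ∀ r ∈ Ioi (0 : ℝ), 0 < y r)
    (hy1 : ∀ r ∈ Ioi (0 : ℝ), DifferentiableAt ℝ y r)
    (hy2 : ∀ r ∈ Ioi (0 : ℝ), DifferentiableAt ℝ (deriv y) r)
    (hode : ∀ r ∈ Ioi (0 : ℝ),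
      deriv (deriv y) r + (n - 1 : ℝ) * (Real.cosh r / Real.sinh r) * deriv y r
        - (n - 1 : ℝ) * y r / (Real.sinh r) ^ 2 = 0)
    (hliminf : Tendsto y atTop (nhds 0))
    (hy' : ∀ r ∈ Ioi (0 : ℝ), deriv y r < 0)
    (z : ℝ → ℝ) (hz : ∀ r, z r = Real.sinh r * deriv y r / y r) :
    Tendsto z (nhdsWithin 0 (Ioi 0)) (nhds (1 - n : ℝ)) := by
  have hn' : (2 : ℝ) ≤ n := by exact_mod_cast hn
  have hriccati : ∀ r ∈ Ioi (0 : ℝ), HasDerivAt z (riccatiQuad n r (z r) / sinh r) r := by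
    intro r hr
    rw [funext hz]
    exact hasDerivAt_sinh_mul_deriv_div (sinh_pos_iff.2 hr).ne' (hpos r hr).ne' (hy1 r hr)
      (hy2 r hr) (hode r hr)
  refine riccati_tendsto_one_sub hn' hriccati fun r₀ hr₀ => ?_
  by_contra! hlow
  have hneg : z r₀ < 0 := by
    rw [hz]
    exact div_neg_of_neg_of_pos (mul_neg_of_pos_of_neg (sinh_pos_iff.2 hr₀) (hy' r₀ hr₀))
      (hpos r₀ hr₀)
  have hpos' : ∀ x ∈ Ici r₀, 0 < x := fun x hx => hr₀.trans_le hx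
  refine not_tendsto_zero_of_logDeriv_ge_div_sinh hr₀ hneg.le (fun x hx => hpos x (hpos' x hx))
    (fun x hx => (hy1 x (hpos' x hx)).hasDerivAt) (fun x hx => ?_) hliminf
  have hx0 := hpos' x hx
  calc z r₀ / sinh x ≤ z x / sinh x := div_le_div_of_nonneg_right
        (riccati_le_of_lowerRoot_lt hn' hriccati hr₀ hlow hneg.le hx) (sinh_pos_iff.2 hx0).le
    _ = deriv y x / y x := by
      rw [hz]
      field_simp [(sinh_pos_iff.2 hx0).ne', (hpos x hx0).ne']

theorem stmt8 (n : ℕ) (hn : 2 ≤ n) (y : ℝ → ℝ)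
    (hpos : ∀ r ∈ Ioi (0 : ℝ), 0 < y r)
    (hy1 : ∀ r ∈ Ioi (0 : ℝ), DifferentiableAt ℝ y r)
    (hy2 : ∀ r ∈ Ioi (0 : ℝ), DifferentiableAt ℝ (deriv y) r)
    (hode : ∀ r ∈ Ioi (0 : ℝ),
      deriv (deriv y) r + (n - 1 : ℝ) * (Real.cosh r / Real.sinh r) * deriv y r
        - (n - 1 : ℝ) * y r / (Real.sinh r) ^ 2 = 0)
    (hlim0 : Tendsto y (nhdsWithin 0 (Ioi 0)) atTop)
    (hliminf : Tendsto y atTop (nhds 0))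
    (hy' : ∀ r ∈ Ioi (0 : ℝ), deriv y r < 0)
    (z : ℝ → ℝ) (hz : ∀ r, z r = Real.sinh r * deriv y r / y r) :
    Tendsto z (nhdsWithin 0 (Ioi 0)) (nhds (1 - n : ℝ)) :=
  stmt8_general n hn y hpos hy1 hy2 hode hliminf hy' z hz
end

section
/- Let n ≥ 2 be an integer and f = sinh. Every positive, twice differentiable solution y : (0,∞) → ℝ of y'' + (n-1)(f'/f)·y' - (n-1)·y/f² = 0 satisfying y(r) → +∞ as r → 0⁺, y(r) → 0 as r → +∞, and y' < 0 on (0,∞), is of the form y(r) = c·(sinh r)^{1-n} for some constant c > 0. -/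
/-!
Write `m = n - 1`. Since `(cosh/sinh)' = -1/sinh²`, the left side of the equation is the
derivative of `w = y' + m coth · y`, so `w` is a constant `K`. If `K > 0`, then `y' < 0` gives
`K < m coth · y`, which tends to `0` at infinity. If `K < 0`, then `y' ≤ K`, so `y` eventually
becomes negative. Hence `K = 0`, i.e. `y' sinh + m y cosh = 0`. This says `y sinh^m` is constant.
-/

open Real Set Filter

theorem exists_eq_const_of_hasDerivAt_zero_Ioi {f : ℝ → ℝ} {a : ℝ}
    (hf : ∀ r ∈ Ioi a, HasDerivAt f 0 r) : ∃ c, ∀ r ∈ Ioi a, f r = c :=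
  isOpen_Ioi.exists_is_const_of_deriv_eq_zero isPreconnected_Ioi
    (fun r hr => (hf r hr).differentiableAt.differentiableWithinAt)
    (fun r hr => (hf r hr).deriv)

theorem nonneg_of_pos_of_deriv_le {f : ℝ → ℝ} {a K : ℝ}
    (hf : ∀ r ∈ Ioi a, DifferentiableAt ℝ f r) (hpos : ∀ r ∈ Ioi a, 0 < f r)
    (hle : ∀ r ∈ Ioi a, deriv f r ≤ K) : 0 ≤ K := by
  by_contra! hK
  have hmvt : ∀ r ∈ Ioi a, ∀ s ∈ Ioi a, r ≤ s → f s - f r ≤ K * (s - r) :=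
    (convex_Ioi a).image_sub_le_mul_sub_of_deriv_le
      (fun r hr => (hf r hr).continuousAt.continuousWithinAt)
      (fun r hr => (hf r (interior_subset hr)).differentiableWithinAt)
      (fun r hr => hle r (interior_subset hr))
  set r := a + 1
  set s := r + f r / -K
  have hr : r ∈ Ioi a := by simp [r]
  have hrs : r ≤ s := le_add_of_nonneg_right (div_nonneg (hpos r hr).le (by linarith))
  have hs : s ∈ Ioi a := lt_of_lt_of_le hr hrs
  have hKs : K * (s - r) = -f r := by
    simp only [s, add_sub_cancel_left]
    field_simp [hK.ne]
  linarith [hmvt r hr s hs hrs, hpos s hs]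

theorem hasDerivAt_cosh_div_sinh {r : ℝ} (hr : r ≠ 0) :
    HasDerivAt (fun t => cosh t / sinh t) (-1 / sinh r ^ 2) r := by
  have hs : sinh r ≠ 0 := sinh_ne_zero.2 hr
  refine ((hasDerivAt_cosh r).div (hasDerivAt_sinh r) hs).congr_deriv ?_
  rw [div_left_inj' (pow_ne_zero 2 hs)]
  linear_combination -cosh_sq r

theorem hasDerivAt_deriv_add_coth_mul (m : ℝ) {y : ℝ → ℝ} {r : ℝ} (hr : r ≠ 0)
    (hy1 : DifferentiableAt ℝ y r) (hy2 : DifferentiableAt ℝ (deriv y) r) :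
    HasDerivAt (fun t => deriv y t + m * (cosh t / sinh t) * y t)
      (deriv (deriv y) r + m * (cosh r / sinh r) * deriv y r - m * y r / sinh r ^ 2) r := by
  refine (hy2.hasDerivAt.add
    (((hasDerivAt_cosh_div_sinh hr).const_mul m).mul hy1.hasDerivAt)).congr_deriv ?_
  ring

theorem hasDerivAt_mul_sinh_zpow (k : ℤ) {y : ℝ → ℝ} {y' r : ℝ} (hr : r ≠ 0)
    (hy : HasDerivAt y y' r) :
    HasDerivAt (fun t => y t * sinh t ^ k)
      ((y' * sinh r + k * y r * cosh r) * sinh r ^ (k - 1)) r := by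
  have hs : sinh r ≠ 0 := sinh_ne_zero.2 hr
  refine (hy.mul ((hasDerivAt_zpow k (sinh r) (Or.inl hs)).comp r
    (hasDerivAt_sinh r))).congr_deriv ?_
  rw [Function.comp_apply, show sinh r ^ k = sinh r * sinh r ^ (k - 1) by
    rw [← zpow_one_add₀ hs, add_sub_cancel]]
  ring

theorem first_integral_eq_zero {m K : ℝ} (hm : 0 ≤ m) {y : ℝ → ℝ}
    (hy : ∀ r ∈ Ioi (0 : ℝ), DifferentiableAt ℝ y r) (hpos : ∀ r ∈ Ioi (0 : ℝ), 0 < y r)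
    (hlim : Tendsto y atTop (nhds 0)) (hy' : ∀ r ∈ Ioi (0 : ℝ), deriv y r < 0)
    (hK : ∀ r ∈ Ioi (0 : ℝ), deriv y r + m * (cosh r / sinh r) * y r = K) : K = 0 := by
  have hcoth : ∀ r ∈ Ioi (0 : ℝ), 0 ≤ m * (cosh r / sinh r) * y r := fun r hr =>
    mul_nonneg (mul_nonneg hm (div_pos (cosh_pos r) (sinh_pos_iff.2 hr)).le) (hpos r hr).le
  refine le_antisymm ?_ (nonneg_of_pos_of_deriv_le hy hpos fun r hr => ?_)
  · have hbound : ∀ᶠ r in atTop, K ≤ m * (cosh 1 / sinh 1) * y r := by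
      filter_upwards [eventually_ge_atTop 1] with r hr1
      have hr : r ∈ Ioi (0 : ℝ) := one_pos.trans_le hr1
      have := mul_le_mul_of_nonneg_right
        (mul_le_mul_of_nonneg_left (cosh_div_sinh_le_cosh_div_sinh one_pos hr1) hm)
        (hpos r hr).le
      linarith [hK r hr, hy' r hr]
    simpa using ge_of_tendsto (hlim.const_mul _) hbound
  · linarith [hK r hr, hcoth r hr]

theorem stmt14_general (n : ℕ) (hn : 2 ≤ n) (y : ℝ → ℝ)
    (hpos : ∀ r ∈ Ioi (0 : ℝ), 0 < y r)
    (hy1 : ∀ r ∈ Ioi (0 : ℝ), DifferentiableAt ℝ y r)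
    (hy2 : ∀ r ∈ Ioi (0 : ℝ), DifferentiableAt ℝ (deriv y) r)
    (hode : ∀ r ∈ Ioi (0 : ℝ),
      deriv (deriv y) r + (n - 1 : ℝ) * (Real.cosh r / Real.sinh r) * deriv y r
        - (n - 1 : ℝ) * y r / (Real.sinh r) ^ 2 = 0)
    (hliminf : Tendsto y atTop (nhds 0))
    (hy' : ∀ r ∈ Ioi (0 : ℝ), deriv y r < 0) :
    ∃ c > (0 : ℝ), ∀ r ∈ Ioi (0 : ℝ), y r = c * Real.sinh r ^ ((1 : ℤ) - n) := by
  have hm : (0 : ℝ) ≤ n - 1 := by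
    rw [sub_nonneg, Nat.one_le_cast]
    omega
  obtain ⟨K, hK⟩ : ∃ K, ∀ r ∈ Ioi (0 : ℝ),
      deriv y r + (n - 1 : ℝ) * (cosh r / sinh r) * y r = K :=
    exists_eq_const_of_hasDerivAt_zero_Ioi fun r hr => by
      simpa only [hode r hr] using
        hasDerivAt_deriv_add_coth_mul (n - 1 : ℝ) hr.ne' (hy1 r hr) (hy2 r hr)
  have hK0 : K = 0 := first_integral_eq_zero hm hy1 hpos hliminf hy' hK
  obtain ⟨c, hc⟩ : ∃ c, ∀ r ∈ Ioi (0 : ℝ), y r * sinh r ^ ((n : ℤ) - 1) = c :=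
    exists_eq_const_of_hasDerivAt_zero_Ioi fun r hr => by
      have hs : sinh r ≠ 0 := (sinh_pos_iff.2 hr).ne'
      have hfirst : deriv y r * sinh r + (n - 1 : ℝ) * y r * cosh r = 0 := by
        have := hK r hr
        rw [hK0] at this
        field_simp at this
        linear_combination this
      refine (hasDerivAt_mul_sinh_zpow _ hr.ne' (hy1 r hr).hasDerivAt).congr_deriv ?_
      push_cast
      rw [hfirst, zero_mul]
  have hs : ∀ r ∈ Ioi (0 : ℝ), 0 < sinh r := fun r hr => sinh_pos_iff.2 hr
  have h1 : (1 : ℝ) ∈ Ioi 0 := mem_Ioi.2 one_pos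
  refine ⟨c, hc 1 h1 ▸ mul_pos (hpos 1 h1) (zpow_pos (hs 1 h1) _), fun r hr => ?_⟩
  rw [← hc r hr, mul_assoc, ← zpow_add₀ (hs r hr).ne']
  simp

theorem stmt14 (n : ℕ) (hn : 2 ≤ n) (y : ℝ → ℝ)
    (hpos : ∀ r ∈ Ioi (0 : ℝ), 0 < y r)
    (hy1 : ∀ r ∈ Ioi (0 : ℝ), DifferentiableAt ℝ y r)
    (hy2 : ∀ r ∈ Ioi (0 : ℝ), DifferentiableAt ℝ (deriv y) r)
    (hode : ∀ r ∈ Ioi (0 : ℝ),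
      deriv (deriv y) r + (n - 1 : ℝ) * (Real.cosh r / Real.sinh r) * deriv y r
        - (n - 1 : ℝ) * y r / (Real.sinh r) ^ 2 = 0)
    (hlim0 : Tendsto y (nhdsWithin 0 (Ioi 0)) atTop)
    (hliminf : Tendsto y atTop (nhds 0))
    (hy' : ∀ r ∈ Ioi (0 : ℝ), deriv y r < 0) :
    ∃ c > (0 : ℝ), ∀ r ∈ Ioi (0 : ℝ), y r = c * Real.sinh r ^ ((1 : ℤ) - n) :=
  stmt14_general n hn y hpos hy1 hy2 hode hliminf hy'
end

section
/- Let n ≥ 3 and suppose z : (0,∞) → ℝ is differentiable with sinh(r)·z' = -z² - (n-2)cosh(r)·z + (n-1), and suppose -β ≤ z(r) < 0 for all r > r̃ for some constants β, r̃ > 0. Then z(r) → 0 as r → +∞. -/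
/-!
Where `z ≤ c < 0` and `r` is large, the term `-(n - 2) cosh r · z ≥ -c sinh r` of the Riccati
equation dominates the bounded term `-z² ≥ -β²`, so `z' ≥ -c/2 > 0` there. A function whose
derivative is bounded below by a positive constant whenever it lies below the level `c` eventually
rises above `c` and never crosses it downwards again. Hence `z` is eventually `≥ c` for every
`c < 0`, while `z < 0`.
-/

open Real Set Filter

lemma eventually_le_of_le_imp_le_deriv {f : ℝ → ℝ} {c δ : ℝ} (hδ : 0 < δ)
    (hf : ∀ᶠ x in atTop, DifferentiableAt ℝ f x)
    (hderiv : ∀ᶠ x in atTop, f x ≤ c → δ ≤ deriv f x) :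
    ∀ᶠ x in atTop, c ≤ f x := by
  obtain ⟨a, ha⟩ := eventually_atTop.1 (hf.and hderiv)
  have hcont : ContinuousOn f (Ici a) := fun x hx => (ha x hx).1.continuousAt.continuousWithinAt
  obtain ⟨x₀, hx₀a, hx₀⟩ : ∃ x₀ ≥ a, c ≤ f x₀ := by
    by_contra! hlt
    set b := a + (c - f a) / δ
    have hab : a ≤ b := le_add_of_nonneg_right (div_nonneg (sub_nonneg.2 (hlt a le_rfl).le) hδ.le)
    have hgrowth := (convex_Ici a).mul_sub_le_image_sub_of_le_deriv hcont
      (fun x hx => (ha x (interior_subset hx)).1.differentiableWithinAt)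
      (fun x hx => (ha x (interior_subset hx)).2 (hlt x (interior_subset hx)).le)
      a self_mem_Ici b hab hab
    have hstep : δ * (b - a) = c - f a := by simp only [b]; field_simp; ring
    linarith [hlt b hab]
  -- `f` cannot cross the level `c` downwards, since it is strictly increasing wherever it equals `c`.
  refine eventually_atTop.2 ⟨x₀, fun x hx => ?_⟩
  refine image_le_of_deriv_right_lt_deriv_boundary' continuousOn_const
    (fun _ _ => hasDerivWithinAt_const _ _ c) hx₀ (hcont.mono fun y hy => hx₀a.trans hy.1)
    (fun y hy => (ha y (hx₀a.trans hy.1)).1.hasDerivAt.hasDerivWithinAt)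
    (fun y hy hy' => hδ.trans_le ((ha y (hx₀a.trans hy.1)).2 hy'.ge)) ⟨hx, le_rfl⟩

lemma Real.tendsto_sinh_atTop : Tendsto sinh atTop atTop :=
  tendsto_atTop_mono' _ ((eventually_ge_atTop 0).mono fun _ => Real.self_le_sinh_iff.2) tendsto_id

lemma sub_sq_div_sinh_le_of_riccati {n r y y' β c : ℝ} (hn : 3 ≤ n) (hr : 0 < r)
    (hode : sinh r * y' = -y ^ 2 - (n - 2) * cosh r * y + (n - 1))
    (hβ : -β ≤ y) (hyc : y ≤ c) (hc : c < 0) :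
    -c - β ^ 2 / sinh r ≤ y' := by
  have hsinh : 0 < sinh r := sinh_pos_iff.2 hr
  have hsq : y ^ 2 ≤ β ^ 2 := sq_le_sq' hβ (by linarith)
  have hcosh : sinh r * -c ≤ (n - 2) * cosh r * -y := by
    have hsc := sinh_lt_cosh r
    calc sinh r * -c ≤ cosh r * -y := by gcongr; linarith
      _ ≤ (n - 2) * (cosh r * -y) :=
        le_mul_of_one_le_left (mul_nonneg (cosh_pos r).le (by linarith)) (by linarith)
      _ = _ := by ring
  have hsplit : -c - β ^ 2 / sinh r = (sinh r * -c - β ^ 2) / sinh r := by field_simp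
  rw [hsplit, div_le_iff₀ hsinh]
  linarith

theorem stmt15_general (n : ℕ) (hn : 3 ≤ n) (z : ℝ → ℝ)
    (hzd : ∀ r ∈ Ioi (0 : ℝ), DifferentiableAt ℝ z r)
    (hode : ∀ r ∈ Ioi (0 : ℝ),
      Real.sinh r * deriv z r
        = -(z r) ^ 2 - (n - 2 : ℝ) * Real.cosh r * z r + (n - 1 : ℝ))
    (β rt : ℝ)
    (hbd : ∀ r > rt, -β ≤ z r ∧ z r < 0) :
    Tendsto z atTop (nhds 0) := by
  have hpos : ∀ᶠ r : ℝ in atTop, 0 < r := eventually_gt_atTop 0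
  have hbd' : ∀ᶠ r in atTop, -β ≤ z r ∧ z r < 0 := (eventually_gt_atTop rt).mono hbd
  refine tendsto_order.2 ⟨fun c hc => ?_, fun c hc => hbd'.mono fun r hr => hr.2.trans hc⟩
  have hsmall : ∀ᶠ r in atTop, β ^ 2 / sinh r < -c / 4 :=
    (tendsto_const_nhds.div_atTop tendsto_sinh_atTop).eventually (gt_mem_nhds (by linarith))
  have hhalf : ∀ᶠ r in atTop, c / 2 ≤ z r := by
    refine eventually_le_of_le_imp_le_deriv (δ := -c / 4) (by linarith) (hpos.mono hzd) ?_
    filter_upwards [hpos, hbd', hsmall] with r hr hzr hsr hzc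
    have := sub_sq_div_sinh_le_of_riccati (by exact_mod_cast hn) hr (hode r hr) hzr.1 hzc
      (by linarith)
    linarith
  exact hhalf.mono fun r hr => by linarith

theorem stmt15 (n : ℕ) (hn : 3 ≤ n) (z : ℝ → ℝ)
    (hzd : ∀ r ∈ Ioi (0 : ℝ), DifferentiableAt ℝ z r)
    (hode : ∀ r ∈ Ioi (0 : ℝ),
      Real.sinh r * deriv z r
        = -(z r) ^ 2 - (n - 2 : ℝ) * Real.cosh r * z r + (n - 1 : ℝ))
    (β rt : ℝ) (hβ : 0 < β) (hrt : 0 < rt)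
    (hbd : ∀ r > rt, -β ≤ z r ∧ z r < 0) :
    Tendsto z atTop (nhds 0) :=
  stmt15_general n hn z hzd hode β rt hbd
end
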